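/- Let κ ≥ 3 be a cardinal, let α ≥ 1 be a countable ordinal, and let a ∈ T_κ^{[α]}. Then there exists an isometry φ of T_κ^{[α]} such that φ(a) = c_{ρ_a} and φ(c_r) = c_r for all r ≤ τ_a. -/

import Mathlib

open Set Filter

noncomputable section

/-- `C` is a valid label set for the valence cardinal `κ`:
`|C| = κ` if `κ` is infinite and `|C| + 1 = κ` (i.e. `|C| = κ - 1`) if `κ` is finite. -/
def IsLabelSet (κ : Cardinal) (C : Type) : Prop :=
  (Cardinal.aleph0 ≤ κ → Cardinal.mk C = κ) ∧ (κ < Cardinal.aleph0 → Cardinal.mk C + 1 = κ)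

/-- An ordinal is countable. -/
def IsCountableOrdinal (o : Ordinal) : Prop := o.card ≤ Cardinal.aleph0

/-- One-step Cantor–Bendixson derivative of a set: its non-isolated points. -/
def cbStep {X : Type*} [TopologicalSpace X] (A : Set X) : Set X :=
  {x | x ∈ A ∧ AccPt x (Filter.principal A)}

/-- The iterated Cantor–Bendixson derivative of a set. -/
def cbDeriv {X : Type*} [TopologicalSpace X] (A : Set X) (o : Ordinal) : Set X :=
  Ordinal.limitRecOn o A (fun _ ih => cbStep ih)
    (fun o _ ih => ⋂ (o' : Ordinal) (h : o' < o), ih o' h)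

/-- The Cantor–Bendixson rank of a set: the least ordinal `γ` such that the `(γ+1)`-st
Cantor–Bendixson derivative equals the `γ`-th one. -/
def cbRank {X : Type*} [TopologicalSpace X] (A : Set X) : Ordinal :=
  sInf {γ | cbDeriv A (γ + 1) = cbDeriv A γ}

theorem cbDeriv_zero {X : Type*} [TopologicalSpace X] (A : Set X) : cbDeriv A 0 = A :=
  Ordinal.limitRecOn_zero ..

theorem cbDeriv_one {X : Type*} [TopologicalSpace X] (A : Set X) :
    cbDeriv A 1 = cbStep A := by
  have : (1 : Ordinal) = Order.succ 0 := by
    rw [← Ordinal.add_one_eq_succ, zero_add]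
  rw [cbDeriv, this, Ordinal.limitRecOn_succ]
  rw [← cbDeriv, cbDeriv_zero]

theorem cbStep_empty {X : Type*} [TopologicalSpace X] : cbStep (∅ : Set X) = ∅ := by
  ext x; simp [cbStep]

theorem cbRank_empty {X : Type*} [TopologicalSpace X] : cbRank (∅ : Set X) = 0 := by
  refine le_antisymm ?_ zero_le
  refine csInf_le' ?_
  show cbDeriv (∅ : Set X) (0 + 1) = cbDeriv (∅ : Set X) 0
  rw [zero_add, cbDeriv_one, cbDeriv_zero, cbStep_empty]

/-- A point of Dyubina's universal real tree over the label set `C` (with distinguished label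
`z`): a function `(-∞, ρ) → C`, encoded as a total function on `ℝ` which takes the value `z`
on `[ρ, ∞)`, which is eventually `z` near `-∞` and piecewise constant from the right. -/
structure UTree (C : Type) (z : C) where
  ρ : ℝ
  f : ℝ → C
  apply_eq_of_ge : ∀ t, ρ ≤ t → f t = z
  eventually_zero : ∃ s, s ≤ ρ ∧ ∀ t, t < s → f t = z
  piecewise_const : ∀ t, t < ρ → ∃ ε > 0, ∀ u, t ≤ u → u ≤ t + ε → u < ρ → f u = f t

namespace UTree

variable {C : Type} {z : C}

theorem ext' {a b : UTree C z} (h1 : a.ρ = b.ρ) (h2 : a.f = b.f) : a = b := by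
  cases a; cases b; cases h1; cases h2; rfl

/-- The partial order `⪯` : `a ⪯ b` iff `a` is the restriction of `b` to `(-∞, ρ_a)`. -/
protected def le (a b : UTree C z) : Prop :=
  a.ρ ≤ b.ρ ∧ ∀ t, t < a.ρ → a.f t = b.f t

/-- The strict order `≺`. -/
protected def lt (a b : UTree C z) : Prop := a.le b ∧ a ≠ b

/-- The set of times up to which `a` and `b` agree. -/
def agreeSet (a b : UTree C z) : Set ℝ :=
  {t | t ≤ min a.ρ b.ρ ∧ ∀ u, u < t → a.f u = b.f u}

theorem agreeSet_nonempty (a b : UTree C z) : (agreeSet a b).Nonempty := by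
  obtain ⟨s₁, hs₁, h₁⟩ := a.eventually_zero
  obtain ⟨s₂, hs₂, h₂⟩ := b.eventually_zero
  refine ⟨min s₁ s₂, le_min ((min_le_left _ _).trans hs₁) ((min_le_right _ _).trans hs₂), ?_⟩
  intro u hu
  rw [h₁ u (lt_of_lt_of_le hu (min_le_left _ _)), h₂ u (lt_of_lt_of_le hu (min_le_right _ _))]

theorem agreeSet_bddAbove (a b : UTree C z) : BddAbove (agreeSet a b) :=
  ⟨min a.ρ b.ρ, fun _ ht => ht.1⟩

/-- `ρ_{a ∧ b}`, the height of the wedge of `a` and `b`. -/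
def wedgeρ (a b : UTree C z) : ℝ := sSup (agreeSet a b)

theorem wedgeρ_le_min (a b : UTree C z) : wedgeρ a b ≤ min a.ρ b.ρ :=
  csSup_le (agreeSet_nonempty a b) fun _ ht => ht.1

theorem agree_of_lt_wedgeρ (a b : UTree C z) {u : ℝ} (hu : u < wedgeρ a b) :
    a.f u = b.f u := by
  obtain ⟨t, ht, hut⟩ := exists_lt_of_lt_csSup (agreeSet_nonempty a b) hu
  exact ht.2 u hut

theorem le_wedgeρ {a b : UTree C z} {t : ℝ} (ht : t ∈ agreeSet a b) : t ≤ wedgeρ a b :=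
  le_csSup (agreeSet_bddAbove a b) ht

theorem wedgeρ_comm (a b : UTree C z) : wedgeρ a b = wedgeρ b a := by
  unfold wedgeρ agreeSet
  congr 1
  ext t
  constructor <;> rintro ⟨h1, h2⟩ <;>
    exact ⟨by rwa [min_comm], fun u hu => (h2 u hu).symm⟩

theorem wedgeρ_self (a : UTree C z) : wedgeρ a a = a.ρ := by
  refine le_antisymm ((wedgeρ_le_min a a).trans (by simp)) ?_
  exact le_wedgeρ ⟨by simp, fun _ _ => rfl⟩

/-- Restriction of `a` to `(-∞, s)` for `s ≤ ρ_a`. -/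
def restrict (a : UTree C z) (s : ℝ) (hs : s ≤ a.ρ) : UTree C z where
  ρ := s
  f := fun t => if t < s then a.f t else z
  apply_eq_of_ge := fun t ht => by
    show (if t < s then a.f t else z) = z
    rw [if_neg (not_lt.mpr ht)]
  eventually_zero := by
    obtain ⟨s', hs', h'⟩ := a.eventually_zero
    refine ⟨min s' s, min_le_right _ _, fun t ht => ?_⟩
    show (if t < s then a.f t else z) = z
    by_cases h : t < s
    · rw [if_pos h]; exact h' t (lt_of_lt_of_le ht (min_le_left _ _))
    · rw [if_neg h]
  piecewise_const := fun t ht => by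
    obtain ⟨ε, hε, h⟩ := a.piecewise_const t (lt_of_lt_of_le ht hs)
    refine ⟨ε, hε, fun u hu1 hu2 hu3 => ?_⟩
    show (if u < s then a.f u else z) = (if t < s then a.f t else z)
    rw [if_pos hu3, if_pos ht]
    exact h u hu1 hu2 (lt_of_lt_of_le hu3 hs)

/-- The wedge `a ∧ b`: the restriction of `a` to `(-∞, ρ_{a ∧ b})`. -/
def wedge (a b : UTree C z) : UTree C z :=
  a.restrict (wedgeρ a b) ((wedgeρ_le_min a b).trans (min_le_left _ _))

theorem min_wedgeρ_le (a b c : UTree C z) :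
    min (wedgeρ a b) (wedgeρ b c) ≤ wedgeρ a c := by
  refine le_wedgeρ ⟨le_min ?_ ?_, fun u hu => ?_⟩
  · exact (min_le_left _ _).trans ((wedgeρ_le_min a b).trans (min_le_left _ _))
  · exact (min_le_right _ _).trans ((wedgeρ_le_min b c).trans (min_le_right _ _))
  · have h1 : a.f u = b.f u :=
      agree_of_lt_wedgeρ a b (lt_of_lt_of_le hu (min_le_left _ _))
    have h2 : b.f u = c.f u :=
      agree_of_lt_wedgeρ b c (lt_of_lt_of_le hu (min_le_right _ _))
    exact h1.trans h2

/-- The metric `d(a,b) = ρ_a + ρ_b - 2 ρ_{a ∧ b}` on the universal real tree. -/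
instance : MetricSpace (UTree C z) where
  dist a b := a.ρ + b.ρ - 2 * wedgeρ a b
  dist_self a := by simp [wedgeρ_self]; ring
  dist_comm a b := by simp only [wedgeρ_comm a b]; ring
  dist_triangle a b c := by
    have hmin := min_wedgeρ_le a b c
    have h1 : wedgeρ a b ≤ b.ρ := (wedgeρ_le_min a b).trans (min_le_right _ _)
    have h2 : wedgeρ b c ≤ b.ρ := (wedgeρ_le_min b c).trans (min_le_left _ _)
    rcases min_cases (wedgeρ a b) (wedgeρ b c) with ⟨heq, hle⟩ | ⟨heq, hle⟩ <;>
      (rw [heq] at hmin; linarith)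
  eq_of_dist_eq_zero := by
    intro a b h
    have h1 : wedgeρ a b ≤ a.ρ := (wedgeρ_le_min a b).trans (min_le_left _ _)
    have h2 : wedgeρ a b ≤ b.ρ := (wedgeρ_le_min a b).trans (min_le_right _ _)
    have hd : a.ρ + b.ρ - 2 * wedgeρ a b = 0 := h
    have ha : a.ρ = wedgeρ a b := by linarith
    have hb : b.ρ = wedgeρ a b := by linarith
    refine ext' (ha.trans hb.symm) (funext fun t => ?_)
    by_cases ht : t < wedgeρ a b
    · exact agree_of_lt_wedgeρ a b ht
    · rw [a.apply_eq_of_ge t (ha.le.trans (not_lt.mp ht)),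
        b.apply_eq_of_ge t (hb.le.trans (not_lt.mp ht))]

theorem dist_def (a b : UTree C z) : dist a b = a.ρ + b.ρ - 2 * wedgeρ a b := rfl

/-- The point `c_ℓ`: the constant function `(-∞, ℓ) → C` with value `z`. -/
def cconst (ℓ : ℝ) : UTree C z where
  ρ := ℓ
  f := fun _ => z
  apply_eq_of_ge := fun _ _ => rfl
  eventually_zero := ⟨ℓ, le_refl ℓ, fun _ _ => rfl⟩
  piecewise_const := fun _ _ => ⟨1, one_pos, fun _ _ _ _ => rfl⟩

/-- The set of points at which `a` is locally non-constant from the left, whose closure is the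
set `P_a`. -/
def badSet (a : UTree C z) : Set ℝ :=
  {t | t < a.ρ ∧ ∀ ε > 0, ∃ u ∈ Icc (t - ε) t, ∃ v ∈ Icc (t - ε) t, a.f u ≠ a.f v}

/-- The set `P_a`. -/
def Pset (a : UTree C z) : Set ℝ := closure (badSet a)

/-- The complexity of `a`: the Cantor–Bendixson rank of `P_a`. -/
def comp (a : UTree C z) : Ordinal := cbRank (Pset a)

/-- The complexity of a pair `a ≺ b`: the Cantor–Bendixson rank of `P_b ∩ [ρ_a, ρ_b]`. -/
def pairComp (a b : UTree C z) : Ordinal := cbRank (Pset b ∩ Icc a.ρ b.ρ)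

/-- `τ_a`: the maximum of all `s ≤ ρ_a` such that `a` is `z` below `s`. -/
def tau (a : UTree C z) : ℝ := sSup {s | s ≤ a.ρ ∧ ∀ t, t < s → a.f t = z}

/-- The tree `T_κ^{[α]}` of points of complexity at most `α`. -/
def level (z : C) (α : Ordinal) : Set (UTree C z) := {a | comp a ≤ α}

theorem Pset_cconst (ℓ : ℝ) : Pset (cconst ℓ : UTree C z) = ∅ := by
  have : badSet (cconst ℓ : UTree C z) = ∅ := by
    ext t
    simp only [badSet, mem_setOf_eq, mem_empty_iff_false, iff_false, not_and]
    intro _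
    push_neg
    exact ⟨1, one_pos, fun u _ v _ => rfl⟩
  rw [Pset, this, closure_empty]

theorem comp_cconst (ℓ : ℝ) : comp (cconst ℓ : UTree C z) = 0 := by
  rw [comp, Pset_cconst, cbRank_empty]

theorem cconst_mem_level {ℓ : ℝ} (α : Ordinal) : (cconst ℓ : UTree C z) ∈ level z α := by
  show comp _ ≤ α
  rw [comp_cconst]
  exact zero_le

/-- The canonical line `L_0 = {c_ℓ : ℓ ∈ ℝ}`. -/
def L0 (z : C) : Set (UTree C z) := Set.range fun ℓ => (cconst ℓ : UTree C z)

/-- The extension of `a` by the label `c` on `[ρ_a, ρ_a + 1)`. -/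
def extend (a : UTree C z) (c : C) : UTree C z where
  ρ := a.ρ + 1
  f := fun t => if t < a.ρ then a.f t else if t < a.ρ + 1 then c else z
  apply_eq_of_ge := fun t ht => by
    show (if t < a.ρ then a.f t else if t < a.ρ + 1 then c else z) = z
    rw [if_neg (not_lt.mpr (by linarith)), if_neg (not_lt.mpr ht)]
  eventually_zero := by
    obtain ⟨s, hs, h⟩ := a.eventually_zero
    refine ⟨min s a.ρ, by have := min_le_right s a.ρ; linarith, fun t ht => ?_⟩
    show (if t < a.ρ then a.f t else if t < a.ρ + 1 then c else z) = z
    rw [if_pos (lt_of_lt_of_le ht (min_le_right _ _))]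
    exact h t (lt_of_lt_of_le ht (min_le_left _ _))
  piecewise_const := by
    intro t ht
    by_cases htρ : t < a.ρ
    · obtain ⟨ε, hε, h⟩ := a.piecewise_const t htρ
      refine ⟨min ε ((a.ρ - t) / 2), lt_min hε (by linarith), fun u hu1 hu2 _ => ?_⟩
      have hu3 : u < a.ρ := by
        have := hu2.trans (add_le_add (le_refl t) (min_le_right _ _))
        linarith
      show (if u < a.ρ then a.f u else if u < a.ρ + 1 then c else z) =
        (if t < a.ρ then a.f t else if t < a.ρ + 1 then c else z)
      rw [if_pos hu3, if_pos htρ]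
      exact h u hu1 (hu2.trans (add_le_add (le_refl t) (min_le_left _ _))) hu3
    · refine ⟨(a.ρ + 1 - t) / 2, by linarith, fun u hu1 hu2 _ => ?_⟩
      have h1 : ¬u < a.ρ := by push_neg at htρ ⊢; linarith
      have h2 : u < a.ρ + 1 := by linarith
      show (if u < a.ρ then a.f u else if u < a.ρ + 1 then c else z) =
        (if t < a.ρ then a.f t else if t < a.ρ + 1 then c else z)
      rw [if_neg h1, if_pos h2, if_neg htρ, if_pos ht]

end UTree

/-- A subset of a metric space is (geodesically) convex if it contains every point
metrically between two of its points. -/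
def MetricConvex {X : Type*} [MetricSpace X] (S : Set X) : Prop :=
  ∀ x ∈ S, ∀ y ∈ S, ∀ w, dist x w + dist w y = dist x y → w ∈ S

/-- `D` is a direction at `x`: a connected component of the complement of `{x}`. -/
def IsDirectionAt {X : Type*} [TopologicalSpace X] (x : X) (D : Set X) : Prop :=
  ∃ y, y ≠ x ∧ D = connectedComponentIn {w | w ≠ x} y

/-- The valence of a space at a point: the number of connected components of the
complement of that point. -/
def valenceAt {X : Type*} [TopologicalSpace X] (x : X) : Cardinal :=
  Cardinal.mk {D : Set X // IsDirectionAt x D}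

/-- A real tree: a geodesic metric space in which any two points are joined by a unique arc. -/
def IsRealTree (X : Type*) [MetricSpace X] : Prop :=
  (∀ x y : X, ∃ γ : ℝ → X, γ 0 = x ∧ γ (dist x y) = y ∧
      ∀ s ∈ Icc (0 : ℝ) (dist x y), ∀ t ∈ Icc (0 : ℝ) (dist x y),
        dist (γ s) (γ t) = |s - t|) ∧
  (∀ (x y : X) (γ₁ γ₂ : Path x y), Function.Injective γ₁ → Function.Injective γ₂ →
      Set.range γ₁ = Set.range γ₂)

/-!
At every time `t`, exchange the label `a(t)` with `0`. Applied to every point `b`, this fibrewise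
transposition is an involution preserving `ρ_b` and the agreement heights `ρ_{b ∧ b'}`, hence an
isometry; it maps `a` to `c_{ρ_a}` and fixes `c_r` for `r ≤ τ_a`, where `a` vanishes.

It can only create breakpoints of `b` at breakpoints of `a` and at `ρ_a`, so
`P_{φ b} ⊆ P_b ∪ P_a ∪ {ρ_a}`. The sets `P_b` are closed and countable (each of their points is
isolated from the right), so `comp b ≤ α` says exactly that the `α`-th Cantor–Bendixson
derivative of `P_b` is empty: a nonempty perfect kernel would be uncountable. Derivatives of
closed sets commute with finite unions, and the point `ρ_a` is gone after one step as `α ≥ 1`.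
-/

section CantorBendixson

variable {X : Type*} [TopologicalSpace X]

theorem cbStep_eq_inter_derivedSet (A : Set X) : cbStep A = A ∩ derivedSet A := rfl

theorem cbStep_subset (A : Set X) : cbStep A ⊆ A := fun _ hx => hx.1

theorem cbStep_mono {A B : Set X} (h : A ⊆ B) : cbStep A ⊆ cbStep B :=
  fun _ hx => ⟨h hx.1, hx.2.mono (principal_mono.2 h)⟩

theorem cbStep_singleton (x : X) : cbStep ({x} : Set X) = ∅ := by
  refine eq_empty_of_forall_notMem fun y ⟨hy, hacc⟩ => ?_
  obtain ⟨w, ⟨-, hw⟩, hwy⟩ := accPt_iff_nhds.1 hacc univ univ_mem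
  exact hwy ((mem_singleton_iff.1 hw).trans (mem_singleton_iff.1 hy).symm)

theorem cbDeriv_add_one (A : Set X) (o : Ordinal) :
    cbDeriv A (o + 1) = cbStep (cbDeriv A o) :=
  Ordinal.limitRecOn_add_one ..

theorem cbDeriv_of_isSuccLimit (A : Set X) {o : Ordinal} (ho : Order.IsSuccLimit o) :
    cbDeriv A o = ⋂ (o' : Ordinal) (_ : o' < o), cbDeriv A o' :=
  Ordinal.limitRecOn_limit _ _ _ _ ho

theorem cbDeriv_mono {A B : Set X} (h : A ⊆ B) (o : Ordinal) : cbDeriv A o ⊆ cbDeriv B o := by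
  induction o using Ordinal.limitRecOn with
  | zero => simpa only [cbDeriv_zero] using h
  | add_one o ih => simpa only [cbDeriv_add_one] using cbStep_mono ih
  | limit o ho ih =>
    rw [cbDeriv_of_isSuccLimit A ho, cbDeriv_of_isSuccLimit B ho]
    exact iInter₂_mono ih

theorem cbDeriv_antitone (A : Set X) : Antitone (cbDeriv A) := by
  intro γ δ h
  induction δ using Ordinal.limitRecOn with
  | zero => rw [nonpos_iff_eq_zero.mp h]
  | add_one o ih =>
    rcases h.eq_or_lt with rfl | hlt
    · exact subset_rfl
    · rw [cbDeriv_add_one]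
      exact (cbStep_subset _).trans (ih (Order.lt_add_one_iff.mp hlt))
  | limit o ho _ =>
    rcases h.eq_or_lt with rfl | hlt
    · exact subset_rfl
    · rw [cbDeriv_of_isSuccLimit A ho]
      exact iInter₂_subset γ hlt

theorem cbRank_le_of_cbDeriv_eq_empty {A : Set X} {α : Ordinal} (h : cbDeriv A α = ∅) :
    cbRank A ≤ α :=
  csInf_le' (by rw [mem_ofPred_eq, cbDeriv_add_one, h, cbStep_empty])

theorem cbStep_union {A B : Set X} (hA : IsClosed A) (hB : IsClosed B) :
    cbStep (A ∪ B) = cbStep A ∪ cbStep B := by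
  simp only [cbStep_eq_inter_derivedSet, derivedSet_union,
    inter_eq_right.2 ((isClosed_iff_derivedSet_subset A).1 hA),
    inter_eq_right.2 ((isClosed_iff_derivedSet_subset B).1 hB),
    inter_eq_right.2 (union_subset_union ((isClosed_iff_derivedSet_subset A).1 hA)
      ((isClosed_iff_derivedSet_subset B).1 hB))]

section T1

variable [T1Space X]

theorem isClosed_cbDeriv {A : Set X} (hA : IsClosed A) (o : Ordinal) : IsClosed (cbDeriv A o) := by
  induction o using Ordinal.limitRecOn with
  | zero => rwa [cbDeriv_zero]
  | add_one o ih =>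
    rw [cbDeriv_add_one, cbStep_eq_inter_derivedSet]
    exact ih.inter (isClosed_derivedSet _)
  | limit o ho ih =>
    rw [cbDeriv_of_isSuccLimit A ho]
    exact isClosed_biInter ih

theorem cbDeriv_union {A B : Set X} (hA : IsClosed A) (hB : IsClosed B) (o : Ordinal) :
    cbDeriv (A ∪ B) o = cbDeriv A o ∪ cbDeriv B o := by
  induction o using Ordinal.limitRecOn with
  | zero => simp only [cbDeriv_zero]
  | add_one o ih =>
    rw [cbDeriv_add_one, cbDeriv_add_one, cbDeriv_add_one, ih,
      cbStep_union (isClosed_cbDeriv hA o) (isClosed_cbDeriv hB o)]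
  | limit o ho ih =>
    rw [cbDeriv_of_isSuccLimit _ ho, cbDeriv_of_isSuccLimit A ho, cbDeriv_of_isSuccLimit B ho,
      iInter₂_congr ih]
    simp only [← iInter_subtype (p := (· < o)) (s := fun o' => cbDeriv A o' ∪ cbDeriv B o'),
      ← iInter_subtype (p := (· < o)) (s := fun o' => cbDeriv A o'),
      ← iInter_subtype (p := (· < o)) (s := fun o' => cbDeriv B o')]
    exact iInter_union_of_antitone (fun _ _ h => cbDeriv_antitone A h)
      (fun _ _ h => cbDeriv_antitone B h)

end T1

theorem exists_cbDeriv_add_one_eq {Y : Type} [TopologicalSpace Y] (A : Set Y) :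
    ∃ γ : Ordinal, cbDeriv A (γ + 1) = cbDeriv A γ := by
  by_contra! hne
  have hstep (γ : Ordinal) : cbDeriv A (γ + 1) ⊂ cbDeriv A γ :=
    ssubset_of_subset_of_ne (by rw [cbDeriv_add_one]; exact cbStep_subset _) (hne γ)
  have hanti : StrictAnti (cbDeriv A) := fun γ δ h =>
    (cbDeriv_antitone A (Order.add_one_le_of_lt h)).trans_lt (hstep γ)
  exact not_injective_of_ordinal _ hanti.injective

theorem perfect_cbDeriv_cbRank {Y : Type} [TopologicalSpace Y] [T1Space Y] {A : Set Y}
    (hA : IsClosed A) : Perfect (cbDeriv A (cbRank A)) := by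
  have hstable : cbDeriv A (cbRank A + 1) = cbDeriv A (cbRank A) :=
    csInf_mem (exists_cbDeriv_add_one_eq A)
  rw [cbDeriv_add_one] at hstable
  exact ⟨isClosed_cbDeriv hA _, fun x hx => (hstable.symm ▸ hx : x ∈ cbStep _).2⟩

theorem Perfect.not_countable {Y : Type*} [MetricSpace Y] [CompleteSpace Y] {K : Set Y}
    (hK : Perfect K) (hne : K.Nonempty) : ¬ K.Countable := by
  intro hc
  obtain ⟨f, hrange, -, hinj⟩ := hK.exists_nat_bool_injection hne
  have huniv : (univ : Set (ℕ → Bool)).Countable := by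
    simpa only [preimage_eq_univ_iff.2 hrange] using hc.preimage hinj
  have hunc : Uncountable (ℕ → Bool) := by
    rw [← not_countable_iff, ← Cardinal.mk_le_aleph0_iff, not_le]
    simpa using Cardinal.cantor Cardinal.aleph0
  exact not_countable_univ huniv

theorem cbDeriv_eq_empty_iff_cbRank_le {Y : Type} [MetricSpace Y] [CompleteSpace Y] {A : Set Y}
    (hA : IsClosed A) (hc : A.Countable) {α : Ordinal} : cbDeriv A α = ∅ ↔ cbRank A ≤ α := by
  refine ⟨cbRank_le_of_cbDeriv_eq_empty, fun h => ?_⟩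
  have hkernel : cbDeriv A (cbRank A) = ∅ := by
    refine not_nonempty_iff_eq_empty.1 fun hne => (perfect_cbDeriv_cbRank hA).not_countable hne ?_
    exact hc.mono (by simpa only [cbDeriv_zero] using cbDeriv_antitone A (zero_le))
  exact subset_empty_iff.1 (hkernel ▸ cbDeriv_antitone A h)

end CantorBendixson

namespace UTree

variable {C : Type} {z : C}

theorem exists_const_on_Icc_right (a : UTree C z) (t : ℝ) :
    ∃ ε > 0, ∀ u ∈ Icc t (t + ε), a.f u = a.f t := by
  by_cases ht : t < a.ρ
  · obtain ⟨ε, hε, hconst⟩ := a.piecewise_const t ht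
    refine ⟨min ε ((a.ρ - t) / 2), lt_min hε (by linarith), fun u hu => ?_⟩
    have hε' := min_le_left ε ((a.ρ - t) / 2)
    have hρ := min_le_right ε ((a.ρ - t) / 2)
    exact hconst u hu.1 (by linarith [hu.2]) (by linarith [hu.2])
  · refine ⟨1, one_pos, fun u hu => ?_⟩
    rw [a.apply_eq_of_ge u ((not_lt.1 ht).trans hu.1), a.apply_eq_of_ge t (not_lt.1 ht)]

theorem exists_const_on_Icc_left (a : UTree C z) {t : ℝ} (ht : t ∉ badSet a) (hρ : t ≠ a.ρ) :
    ∃ ε > 0, ∀ u ∈ Icc (t - ε) t, a.f u = a.f t := by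
  rcases hρ.lt_or_gt with hlt | hgt
  · simp only [badSet, mem_ofPred_eq, not_and, not_forall, not_exists, not_not] at ht
    obtain ⟨ε, hε, hconst⟩ := ht hlt
    exact ⟨ε, hε, fun u hu => hconst u hu t ⟨by linarith, le_rfl⟩⟩
  · refine ⟨t - a.ρ, sub_pos.2 hgt, fun u hu => ?_⟩
    rw [a.apply_eq_of_ge u (by linarith [hu.1]), a.apply_eq_of_ge t hgt.le]

theorem apply_eq_of_lt_tau (a : UTree C z) {u : ℝ} (h : u < tau a) : a.f u = z := by
  obtain ⟨s, hs, hus⟩ := exists_lt_of_lt_csSup (by exact a.eventually_zero) h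
  exact hs.2 u hus

theorem isClosed_Pset (a : UTree C z) : IsClosed (Pset a) := isClosed_closure

theorem exists_disjoint_Pset_Ioo (a : UTree C z) (t : ℝ) :
    ∃ ε > 0, Disjoint (Pset a) (Ioo t (t + ε)) := by
  obtain ⟨ε, hε, hconst⟩ := a.exists_const_on_Icc_right t
  refine ⟨ε, hε, Disjoint.closure_left (disjoint_left.2 ?_) isOpen_Ioo⟩
  rintro s ⟨-, hbad⟩ hs
  obtain ⟨u, hu, v, hv, huv⟩ := hbad (s - t) (sub_pos.2 hs.1)
  have hsub : Icc (s - (s - t)) s ⊆ Icc t (t + ε) := by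
    rw [sub_sub_cancel]
    exact Icc_subset_Icc_right hs.2.le
  exact huv ((hconst u (hsub hu)).trans (hconst v (hsub hv)).symm)

theorem countable_Pset (a : UTree C z) : (Pset a).Countable := by
  refine Countable.mono ?_ (countable_setOfPred_isolated_right_within (s := Pset a))
  refine fun t ht => ⟨ht, ?_⟩
  obtain ⟨ε, hε, hdisj⟩ := a.exists_disjoint_Pset_Ioo t
  rw [← empty_mem_iff_bot, mem_nhdsWithin_iff_exists_mem_nhds_inter]
  exact ⟨Iio (t + ε), Iio_mem_nhds (by linarith),
    fun s ⟨hs, hsP, hts⟩ => hdisj.ne_of_mem hsP ⟨hts, hs⟩ rfl⟩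

theorem comp_le_iff (a : UTree C z) {α : Ordinal} : comp a ≤ α ↔ cbDeriv (Pset a) α = ∅ :=
  (cbDeriv_eq_empty_iff_cbRank_le a.isClosed_Pset a.countable_Pset).symm

section SwapAlong

variable [DecidableEq C]

def swapAlong (a b : UTree C z) : UTree C z where
  ρ := b.ρ
  f u := if u < b.ρ then Equiv.swap (a.f u) z (b.f u) else z
  apply_eq_of_ge t ht := if_neg (not_lt.2 ht)
  eventually_zero := by
    obtain ⟨s₁, -, h₁⟩ := a.eventually_zero
    obtain ⟨s₂, hs₂, h₂⟩ := b.eventually_zero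
    refine ⟨min s₁ s₂, (min_le_right _ _).trans hs₂, fun t ht => ?_⟩
    rw [h₁ t (ht.trans_le (min_le_left _ _)), h₂ t (ht.trans_le (min_le_right _ _)),
      Equiv.swap_self, Equiv.refl_apply, ite_self]
  piecewise_const t ht := by
    obtain ⟨ε₁, hε₁, ha⟩ := a.exists_const_on_Icc_right t
    obtain ⟨ε₂, hε₂, hb⟩ := b.exists_const_on_Icc_right t
    refine ⟨min ε₁ ε₂, lt_min hε₁ hε₂, fun u htu hu hub => ?_⟩
    have hu₁ : u ∈ Icc t (t + ε₁) := ⟨htu, hu.trans (by linarith [min_le_left ε₁ ε₂])⟩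
    have hu₂ : u ∈ Icc t (t + ε₂) := ⟨htu, hu.trans (by linarith [min_le_right ε₁ ε₂])⟩
    simp only [if_pos hub, if_pos ht, ha u hu₁, hb u hu₂]

theorem ρ_swapAlong (a b : UTree C z) : (swapAlong a b).ρ = b.ρ := rfl

theorem swapAlong_f_of_lt (a b : UTree C z) {u : ℝ} (h : u < b.ρ) :
    (swapAlong a b).f u = Equiv.swap (a.f u) z (b.f u) :=
  if_pos h

theorem swapAlong_swapAlong (a b : UTree C z) : swapAlong a (swapAlong a b) = b := by
  refine ext' rfl (funext fun u => ?_)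
  by_cases h : u < b.ρ
  · rw [swapAlong_f_of_lt a (swapAlong a b) h, swapAlong_f_of_lt a b h, Equiv.swap_apply_self]
  · exact (if_neg h).trans (b.apply_eq_of_ge u (not_lt.1 h)).symm

theorem agreeSet_swapAlong (a b b' : UTree C z) :
    agreeSet (swapAlong a b) (swapAlong a b') = agreeSet b b' := by
  ext t
  simp only [agreeSet, mem_ofPred_eq, ρ_swapAlong]
  refine and_congr_right fun ht => forall₂_congr fun u hu => ?_
  rw [swapAlong_f_of_lt a b (hu.trans_le (ht.trans (min_le_left _ _))),
    swapAlong_f_of_lt a b' (hu.trans_le (ht.trans (min_le_right _ _))),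
    (Equiv.swap _ _).injective.eq_iff]

theorem dist_swapAlong (a b b' : UTree C z) :
    dist (swapAlong a b) (swapAlong a b') = dist b b' := by
  simp only [dist_def, ρ_swapAlong, wedgeρ, agreeSet_swapAlong]

theorem swapAlong_self (a : UTree C z) : swapAlong a a = cconst a.ρ := by
  refine ext' rfl (funext fun u => ?_)
  by_cases h : u < a.ρ
  · exact (swapAlong_f_of_lt a a h).trans (Equiv.swap_apply_left _ _)
  · exact if_neg h

theorem swapAlong_cconst (a : UTree C z) {r : ℝ} (hr : r ≤ tau a) :
    swapAlong a (cconst r) = cconst r := by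
  refine ext' rfl (funext fun u => ?_)
  by_cases h : u < r
  · exact (swapAlong_f_of_lt a _ h).trans
      ((Equiv.swap_apply_right _ _).trans (a.apply_eq_of_lt_tau (h.trans_le hr)))
  · exact if_neg h

theorem badSet_swapAlong_subset (a b : UTree C z) :
    badSet (swapAlong a b) ⊆ badSet b ∪ badSet a ∪ {a.ρ} := by
  intro t ht
  by_contra hnot
  simp only [mem_union, mem_singleton_iff, not_or] at hnot
  obtain ⟨⟨hb, ha⟩, hρ⟩ := hnot
  obtain ⟨ε₁, hε₁, hbc⟩ := b.exists_const_on_Icc_left hb ht.1.ne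
  obtain ⟨ε₂, hε₂, hac⟩ := a.exists_const_on_Icc_left ha hρ
  have hconst : ∀ w ∈ Icc (t - min ε₁ ε₂) t, (swapAlong a b).f w = (swapAlong a b).f t := by
    intro w hw
    have hw₁ : w ∈ Icc (t - ε₁) t := ⟨by linarith [hw.1, min_le_left ε₁ ε₂], hw.2⟩
    have hw₂ : w ∈ Icc (t - ε₂) t := ⟨by linarith [hw.1, min_le_right ε₁ ε₂], hw.2⟩
    rw [swapAlong_f_of_lt a b (hw.2.trans_lt ht.1), swapAlong_f_of_lt a b ht.1, hbc w hw₁,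
      hac w hw₂]
  obtain ⟨u, hu, v, hv, huv⟩ := ht.2 (min ε₁ ε₂) (lt_min hε₁ hε₂)
  exact huv ((hconst u hu).trans (hconst v hv).symm)

theorem Pset_swapAlong_subset (a b : UTree C z) :
    Pset (swapAlong a b) ⊆ Pset b ∪ Pset a ∪ {a.ρ} := by
  simpa only [Pset, closure_union, closure_singleton] using
    closure_mono (badSet_swapAlong_subset a b)

theorem swapAlong_mem_level {α : Ordinal} (hα : 1 ≤ α) {a b : UTree C z}
    (ha : a ∈ level z α) (hb : b ∈ level z α) : swapAlong a b ∈ level z α := by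
  simp only [level, mem_ofPred_eq, comp_le_iff] at ha hb ⊢
  have hρ : cbDeriv ({a.ρ} : Set ℝ) α = ∅ := subset_empty_iff.1 <|
    (cbDeriv_antitone _ hα).trans (by rw [cbDeriv_one, cbStep_singleton])
  refine subset_empty_iff.1 ((cbDeriv_mono (Pset_swapAlong_subset a b) α).trans ?_)
  rw [cbDeriv_union (b.isClosed_Pset.union a.isClosed_Pset) isClosed_singleton,
    cbDeriv_union b.isClosed_Pset a.isClosed_Pset, ha, hb, hρ, union_empty, union_empty]

def swapAlongIsometryEquiv {α : Ordinal} (hα : 1 ≤ α) {a : UTree C z} (ha : a ∈ level z α) :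
    level z α ≃ᵢ level z α where
  toFun b := ⟨swapAlong a b, swapAlong_mem_level hα ha b.2⟩
  invFun b := ⟨swapAlong a b, swapAlong_mem_level hα ha b.2⟩
  left_inv b := Subtype.ext (swapAlong_swapAlong a b)
  right_inv b := Subtype.ext (swapAlong_swapAlong a b)
  isometry_toFun := Isometry.of_dist_eq fun b b' => dist_swapAlong a b b'

end SwapAlong

end UTree

theorem stmt7_general (C : Type) (z : C)
    (α : Ordinal) (hα1 : 1 ≤ α)
    (a : UTree C z) (ha : a ∈ UTree.level z α) :
    ∃ φ : ↥(UTree.level z α) ≃ᵢ ↥(UTree.level z α),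
      φ ⟨a, ha⟩ = ⟨UTree.cconst a.ρ, UTree.cconst_mem_level α⟩ ∧
      ∀ r : ℝ, r ≤ UTree.tau a →
        φ ⟨UTree.cconst r, UTree.cconst_mem_level α⟩ =
          ⟨UTree.cconst r, UTree.cconst_mem_level α⟩ := by
  classical
  exact ⟨UTree.swapAlongIsometryEquiv hα1 ha, Subtype.ext (UTree.swapAlong_self a),
    fun r hr => Subtype.ext (UTree.swapAlong_cconst a hr)⟩

/-- Claim 1 of Lemma 2-transitive: for every `a ∈ T_κ^{[α]}` there is an isometry of
`T_κ^{[α]}` sending `a` to `c_{ρ_a}` and fixing `c_r` for all `r ≤ τ_a`. -/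
theorem stmt7 (κ : Cardinal) (hκ : 3 ≤ κ) (C : Type) (z : C) (hC : IsLabelSet κ C)
    (α : Ordinal) (hα1 : 1 ≤ α) (hαc : IsCountableOrdinal α)
    (a : UTree C z) (ha : a ∈ UTree.level z α) :
    ∃ φ : ↥(UTree.level z α) ≃ᵢ ↥(UTree.level z α),
      φ ⟨a, ha⟩ = ⟨UTree.cconst a.ρ, UTree.cconst_mem_level α⟩ ∧
      ∀ r : ℝ, r ≤ UTree.tau a →
        φ ⟨UTree.cconst r, UTree.cconst_mem_level α⟩ =
          ⟨UTree.cconst r, UTree.cconst_mem_level α⟩ :=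
  stmt7_general C z α hα1 a ha

end
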